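/- arXiv:2510.09313 — 4 statements merged into one kernel-verified Lean document; each statement's English description precedes it below -/
import Mathlib

section
/- Let U ⊆ ℝ^{m₁} be a domain, f₁, …, f_r : U → ℝ^{m₂} be C¹ maps, and ξ : U → 2^{[r]} be a function (with ξ(x) nonempty for all x) such that: (1) if ξ(x) = {i₁, …, i_p}, then f_{i₁}(x) = … = f_{i_p}(x) and the differentials df_{i₁,x} = … = df_{i_p,x} coincide; (2) if x_i → x and j ∈ ξ(x_i) for all i, then j ∈ ξ(x). Define f : U → ℝ^{m₂} by f(x) = f_j(x) for any j ∈ ξ(x). Then f is C¹ on U, with df_x = df_{j,x} for j ∈ ξ(x). -/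
open Filter Topology

theorem stmt5 {m₁ m₂ r : ℕ} (U : Set (Fin m₁ → ℝ)) (hU : IsOpen U)
    (F : Fin r → (Fin m₁ → ℝ) → (Fin m₂ → ℝ))
    (hF : ∀ j, ContDiffOn ℝ 1 (F j) U)
    (ξ : (Fin m₁ → ℝ) → Set (Fin r))
    (hne : ∀ x ∈ U, (ξ x).Nonempty)
    (hval : ∀ x ∈ U, ∀ i ∈ ξ x, ∀ j ∈ ξ x,
      F i x = F j x ∧ fderivWithin ℝ (F i) U x = fderivWithin ℝ (F j) U x)
    (hclosed : ∀ j : Fin r, ∀ x ∈ U, ∀ u : ℕ → (Fin m₁ → ℝ),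
      (∀ n, u n ∈ U ∧ j ∈ ξ (u n)) → Tendsto u atTop (𝓝 x) → j ∈ ξ x)
    (f : (Fin m₁ → ℝ) → (Fin m₂ → ℝ))
    (hf : ∀ x ∈ U, ∀ j ∈ ξ x, f x = F j x) :
    ContDiffOn ℝ 1 f U ∧
    ∀ x ∈ U, ∀ j ∈ ξ x, fderivWithin ℝ f U x = fderivWithin ℝ (F j) U x := by
  classical
  set D : Fin r → (Fin m₁ → ℝ) → ((Fin m₁ → ℝ) →L[ℝ] (Fin m₂ → ℝ)) :=
    fun j x => fderivWithin ℝ (F j) U x with hD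
  -- Key lemma: locally, ξ y ⊆ ξ x
  have hA : ∀ x ∈ U, ∃ V, IsOpen V ∧ x ∈ V ∧ ∀ y ∈ V ∩ U, ξ y ⊆ ξ x := by
    intro x hx
    set S : Fin r → Set (Fin m₁ → ℝ) := fun j => {y | y ∈ U ∧ j ∈ ξ y} with hS
    set W : Fin r → Set (Fin m₁ → ℝ) :=
      fun j => if j ∈ ξ x then Set.univ else (closure (S j))ᶜ with hW
    have hnc : ∀ j : Fin r, j ∉ ξ x → x ∉ closure (S j) := by
      intro j hj hmem
      rw [mem_closure_iff_seq_limit] at hmem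
      obtain ⟨u, hu, hlim⟩ := hmem
      exact hj (hclosed j x hx u (fun n => (hu n)) hlim)
    refine ⟨⋂ j, W j, ?_, ?_, ?_⟩
    · refine isOpen_iInter_of_finite fun j => ?_
      by_cases h : j ∈ ξ x
      · simp only [W, if_pos h]; exact isOpen_univ
      · simp only [W, if_neg h]; exact isOpen_compl_iff.2 isClosed_closure
    · refine Set.mem_iInter.2 fun j => ?_
      by_cases h : j ∈ ξ x
      · simp only [W, if_pos h]; trivial
      · simp only [W, if_neg h]; exact hnc j h
    · intro y hy j hj
      by_contra hjx
      have hyW : y ∈ W j := Set.mem_iInter.1 hy.1 j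
      rw [hW] at hyW
      simp only [hjx, if_neg] at hyW
      exact hyW (subset_closure ⟨hy.2, hj⟩)
  -- Derivative lemma
  have hB : ∀ x ∈ U, ∀ j ∈ ξ x, HasFDerivWithinAt f (D j x) U x := by
    intro x hx j hj
    obtain ⟨V, hVo, hxV, hV⟩ := hA x hx
    have hder : ∀ k : Fin r, HasFDerivWithinAt (F k) (D k x) U x := fun k =>
      (((hF k).differentiableOn one_ne_zero) x hx).hasFDerivWithinAt
    rw [hasFDerivWithinAt_iff_isLittleO]
    have hsum : (fun y => ∑ k : Fin r, ‖F k y - F k x - D k x (y - x)‖)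
        =o[𝓝[U] x] fun y => y - x := by
      refine Asymptotics.IsLittleO.fun_sum fun k _ => ?_
      exact (hder k).isLittleO.norm_left
    refine (Asymptotics.isBigO_iff.2 ⟨1, ?_⟩).trans_isLittleO hsum
    filter_upwards [nhdsWithin_le_nhds (hVo.mem_nhds hxV), self_mem_nhdsWithin] with y hyV hyU
    obtain ⟨k, hk⟩ := hne y hyU
    have hkx : k ∈ ξ x := hV y ⟨hyV, hyU⟩ hk
    have h1 : f y = F k y := hf y hyU k hk
    have h2 : f x = F k x := by rw [hf x hx j hj, (hval x hx j hj k hkx).1]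
    have h3 : D j x = D k x := (hval x hx j hj k hkx).2
    rw [one_mul, h1, h2, h3]
    calc ‖F k y - F k x - (D k x) (y - x)‖
        ≤ ∑ i : Fin r, ‖F i y - F i x - D i x (y - x)‖ :=
          Finset.single_le_sum (f := fun i => ‖F i y - F i x - D i x (y - x)‖)
            (fun i _ => norm_nonneg _) (Finset.mem_univ k)
      _ ≤ ‖∑ i : Fin r, ‖F i y - F i x - D i x (y - x)‖‖ := le_abs_self _
  have hC : ∀ x ∈ U, ∀ j ∈ ξ x, fderivWithin ℝ f U x = D j x := fun x hx j hj =>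
    (hB x hx j hj).fderivWithin (hU.uniqueDiffOn x hx)
  have hdiff : DifferentiableOn ℝ f U := fun x hx => by
    obtain ⟨j, hj⟩ := hne x hx
    exact (hB x hx j hj).differentiableWithinAt
  have hcont : ContinuousOn (fderivWithin ℝ f U) U := by
    intro x hx
    obtain ⟨j, hj⟩ := hne x hx
    obtain ⟨V, hVo, hxV, hV⟩ := hA x hx
    have hDk : ∀ k : Fin r, ContinuousWithinAt (D k) U x := fun k =>
      ((hF k).continuousOn_fderivWithin hU.uniqueDiffOn le_rfl) x hx
    rw [ContinuousWithinAt, tendsto_iff_norm_sub_tendsto_zero]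
    have hsum0 : Tendsto (fun y => ∑ k : Fin r, ‖D k y - D k x‖) (𝓝[U] x) (𝓝 0) := by
      have : Tendsto (fun y => ∑ k : Fin r, ‖D k y - D k x‖) (𝓝[U] x)
          (𝓝 (∑ k : Fin r, (0 : ℝ))) := by
        refine tendsto_finset_sum _ fun k _ => ?_
        exact tendsto_iff_norm_sub_tendsto_zero.1 (hDk k)
      simpa using this
    refine squeeze_zero' (Eventually.of_forall fun y => norm_nonneg _) ?_ hsum0
    filter_upwards [nhdsWithin_le_nhds (hVo.mem_nhds hxV), self_mem_nhdsWithin] with y hyV hyU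
    obtain ⟨k, hk⟩ := hne y hyU
    have hkx : k ∈ ξ x := hV y ⟨hyV, hyU⟩ hk
    have h1 : fderivWithin ℝ f U y = D k y := hC y hyU k hk
    have h2 : fderivWithin ℝ f U x = D k x := by
      rw [hC x hx j hj]; exact (hval x hx j hj k hkx).2
    rw [h1, h2]
    exact Finset.single_le_sum (f := fun i => ‖D i y - D i x‖)
      (fun i _ => norm_nonneg _) (Finset.mem_univ k)
  refine ⟨?_, hC⟩
  rw [show (1 : WithTop ℕ∞) = 0 + 1 from rfl,
    contDiffOn_succ_iff_fderivWithin hU.uniqueDiffOn]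
  exact ⟨hdiff, by simp, contDiffOn_zero.2 hcont⟩
end

section
/- Special one-dimensional case: let I ⊆ ℝ be an open interval, f₁, …, f_r : I → ℝ be C¹ functions, and suppose f : I → ℝ satisfies: for every x ∈ I there is a nonempty set ξ(x) ⊆ {1,…,r} with f(x) = f_j(x) for all j ∈ ξ(x), f_j(x) and f_j'(x) agree for all j ∈ ξ(x), and the set-valued map ξ has the closure property that if x_i → x and j ∈ ξ(x_i) for all i then j ∈ ξ(x). Then f is differentiable at every x ∈ I with f'(x) = f_j'(x) for j ∈ ξ(x), and f' is continuous. -/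
open Filter Topology

theorem stmt6 {r : ℕ} (a b : ℝ) (F : Fin r → ℝ → ℝ)
    (hF : ∀ j, ContDiffOn ℝ 1 (F j) (Set.Ioo a b))
    (ξ : ℝ → Set (Fin r))
    (hne : ∀ x ∈ Set.Ioo a b, (ξ x).Nonempty)
    (hval : ∀ x ∈ Set.Ioo a b, ∀ i ∈ ξ x, ∀ j ∈ ξ x,
      F i x = F j x ∧
      derivWithin (F i) (Set.Ioo a b) x = derivWithin (F j) (Set.Ioo a b) x)
    (hclosed : ∀ j : Fin r, ∀ x ∈ Set.Ioo a b, ∀ u : ℕ → ℝ,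
      (∀ n, u n ∈ Set.Ioo a b ∧ j ∈ ξ (u n)) → Tendsto u atTop (𝓝 x) → j ∈ ξ x)
    (f : ℝ → ℝ)
    (hf : ∀ x ∈ Set.Ioo a b, ∀ j ∈ ξ x, f x = F j x) :
    (∀ x ∈ Set.Ioo a b, ∀ j ∈ ξ x,
      HasDerivAt f (derivWithin (F j) (Set.Ioo a b) x) x) ∧
    ContinuousOn (fun x => derivWithin f (Set.Ioo a b) x) (Set.Ioo a b) := by
  set s := Set.Ioo a b with hs
  have hso : IsOpen s := isOpen_Ioo
  have hud : UniqueDiffOn ℝ s := hso.uniqueDiffOn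
  -- each F j has a genuine derivative (equal to derivWithin) at points of s
  have hder : ∀ j, ∀ x ∈ s, HasDerivAt (F j) (derivWithin (F j) s x) x := by
    intro j x hx
    have h1 : DifferentiableWithinAt ℝ (F j) s x :=
      (hF j).differentiableOn one_ne_zero x hx
    exact h1.hasDerivWithinAt.hasDerivAt (hso.mem_nhds hx)
  -- closure hypothesis in filter form
  have hcl : ∀ x ∈ s, ∀ k : Fin r, (∃ᶠ y in 𝓝 x, y ∈ s ∧ k ∈ ξ y) → k ∈ ξ x := by
    intro x hx k hfreq
    have hsel : ∀ n : ℕ, ∃ y, (y ∈ s ∧ k ∈ ξ y) ∧ dist y x < 1 / (n + 1) := by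
      intro n
      have hb : Metric.ball x (1 / (n + 1)) ∈ 𝓝 x :=
        Metric.ball_mem_nhds x (by positivity)
      obtain ⟨y, hy1, hy2⟩ :=
        (hfreq.and_eventually (eventually_of_mem hb (fun y hy => hy))).exists
      exact ⟨y, hy1, hy2⟩
    choose u hu1 hu2 using hsel
    refine hclosed k x hx u hu1 ?_
    refine tendsto_iff_dist_tendsto_zero.mpr ?_
    refine squeeze_zero (fun n => dist_nonneg) (fun n => (hu2 n).le) ?_
    exact tendsto_one_div_add_atTop_nhds_zero_nat
  -- key: eventually ξ y ⊆ ξ x near x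
  have hsub : ∀ x ∈ s, ∀ᶠ y in 𝓝 x, y ∈ s → ξ y ⊆ ξ x := by
    intro x hx
    have hk' : ∀ k : Fin r, k ∉ ξ x → ∀ᶠ y in 𝓝 x, ¬(y ∈ s ∧ k ∈ ξ y) := by
      intro k hk
      by_contra h
      exact hk (hcl x hx k ((not_eventually.mp h).mono fun y hy => not_not.mp hy))
    have hall : ∀ᶠ y in 𝓝 x, ∀ k : Fin r, k ∉ ξ x → ¬(y ∈ s ∧ k ∈ ξ y) := by
      rw [eventually_all]
      intro k
      by_cases hk : k ∈ ξ x
      · exact Eventually.of_forall fun y h => absurd hk h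
      · exact (hk' k hk).mono fun y hy _ => hy
    refine hall.mono fun y hy hys k hky => ?_
    by_contra hkx
    exact hy k hkx ⟨hys, hky⟩
  -- Part 1: differentiability of f
  have main : ∀ x ∈ s, ∀ j ∈ ξ x, HasDerivAt f (derivWithin (F j) s x) x := by
    intro x hx j hj
    set d := derivWithin (F j) s x with hd
    rw [hasDerivAt_iff_isLittleO, Asymptotics.isLittleO_iff]
    intro c hc
    have hFo : ∀ᶠ y in 𝓝 x, ∀ k : Fin r, k ∈ ξ x →
        ‖F k y - F k x - (y - x) • d‖ ≤ c * ‖y - x‖ := by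
      rw [eventually_all]
      intro k
      by_cases hk : k ∈ ξ x
      · have hdk : derivWithin (F k) s x = d := (hval x hx k hk j hj).2
        have h := hasDerivAt_iff_isLittleO.mp (hder k x hx)
        rw [hdk] at h
        exact (Asymptotics.isLittleO_iff.mp h hc).mono fun y hy _ => hy
      · exact Eventually.of_forall fun y h => absurd h hk
    filter_upwards [hFo, hsub x hx, hso.mem_nhds hx] with y hy1 hy2 hy3
    obtain ⟨k, hk⟩ := hne y hy3
    have hks : k ∈ ξ x := hy2 hy3 hk
    rw [hf y hy3 k hk, hf x hx k hks]
    exact hy1 k hks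
  refine ⟨main, ?_⟩
  -- derivWithin of f equals that of any selected F k
  have hgeq : ∀ x ∈ s, ∀ k ∈ ξ x, derivWithin f s x = derivWithin (F k) s x := by
    intro x hx k hk
    exact (main x hx k hk).hasDerivWithinAt.derivWithin (hud x hx)
  intro x hx
  have hcont : ∀ k : Fin r, ContinuousOn (fun y => derivWithin (F k) s y) s :=
    fun k => (hF k).continuousOn_derivWithin hud le_rfl
  refine Metric.tendsto_nhds.mpr fun ε hε => ?_
  have h1 : ∀ᶠ y in 𝓝[s] x, ∀ k : Fin r, k ∈ ξ x →
      dist (derivWithin (F k) s y) (derivWithin (F k) s x) < ε := by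
    rw [eventually_all]
    intro k
    by_cases hk : k ∈ ξ x
    · exact (Metric.tendsto_nhds.mp (hcont k x hx) ε hε).mono fun y hy _ => hy
    · exact Eventually.of_forall fun y h => absurd h hk
  have h2 : ∀ᶠ y in 𝓝[s] x, y ∈ s := eventually_mem_nhdsWithin
  have h3 : ∀ᶠ y in 𝓝[s] x, y ∈ s → ξ y ⊆ ξ x := (hsub x hx).filter_mono nhdsWithin_le_nhds
  filter_upwards [h1, h2, h3] with y hy1 hy2 hy3
  obtain ⟨k, hk⟩ := hne y hy2
  have hks : k ∈ ξ x := hy3 hy2 hk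

  rw [hgeq y hy2 k hk, hgeq x hx k hks]
  exact hy1 k hks
end

section
/- In ℝ^m with m ≥ 2, let (x^i) be a sequence of points converging to the origin o, all distinct from o, and suppose that for a chosen coordinate system the m-th coordinates x^i_m are strictly positive and monotonically decreasing to 0. Then there exists a C¹ curve χ : [0,1] → ℝ^m with χ(0) = o that contains infinitely many of the points x^i and whose m-th coordinate function χ_m is monotonically increasing. -/
open Filter Topology

lemma expNegInvGlue_monotone : Monotone expNegInvGlue := by
  intro a b hab
  rcases le_or_gt b 0 with hb | hb
  · rw [expNegInvGlue.zero_of_nonpos (hab.trans hb), expNegInvGlue.zero_of_nonpos hb]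
  rcases le_or_gt a 0 with ha | ha
  · rw [expNegInvGlue.zero_of_nonpos ha]; exact expNegInvGlue.nonneg b
  · have h1 : expNegInvGlue a = Real.exp (-a⁻¹) := by simp [expNegInvGlue, ha.not_ge]
    have h2 : expNegInvGlue b = Real.exp (-b⁻¹) := by simp [expNegInvGlue, hb.not_ge]
    rw [h1, h2]
    apply Real.exp_le_exp.2
    have : b⁻¹ ≤ a⁻¹ := by gcongr
    linarith

lemma smoothTransition_monotone : Monotone Real.smoothTransition := by
  intro a b hab
  have hd : ∀ y : ℝ, 0 < expNegInvGlue y + expNegInvGlue (1 - y) := by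
    intro y
    rcases lt_or_ge 0 y with hy | hy
    · exact add_pos_of_pos_of_nonneg (expNegInvGlue.pos_of_pos hy) (expNegInvGlue.nonneg _)
    · exact add_pos_of_nonneg_of_pos (expNegInvGlue.nonneg _)
        (expNegInvGlue.pos_of_pos (by linarith))
  unfold Real.smoothTransition
  rw [div_le_div_iff₀ (hd a) (hd b)]
  have h1 := expNegInvGlue_monotone hab
  have h2 : expNegInvGlue (1 - b) ≤ expNegInvGlue (1 - a) := expNegInvGlue_monotone (by linarith)
  nlinarith [expNegInvGlue.nonneg a, expNegInvGlue.nonneg b,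
    expNegInvGlue.nonneg (1 - a), expNegInvGlue.nonneg (1 - b)]

lemma smoothTransition_deriv_bound :
    ∃ C : ℝ, 0 ≤ C ∧ ∀ y : ℝ, |deriv Real.smoothTransition y| ≤ C := by
  have hcont : Continuous (deriv Real.smoothTransition) :=
    (Real.smoothTransition.contDiff (n := 2)).continuous_deriv one_le_two
  obtain ⟨C, hC⟩ := (isCompact_Icc (a := (0:ℝ)) (b := 1)).exists_bound_of_continuousOn
    hcont.continuousOn
  refine ⟨max C 0, le_max_right _ _, fun y => ?_⟩
  rcases lt_or_ge y 0 with hy | hy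
  · have hz : deriv Real.smoothTransition y = 0 := by
      have he : Real.smoothTransition =ᶠ[𝓝 y] fun _ => 0 := by
        filter_upwards [Iio_mem_nhds hy] with z hz
        exact Real.smoothTransition.zero_of_nonpos hz.le
      rw [he.deriv_eq, deriv_const]
    simp [hz]
  rcases le_or_gt y 1 with hy1 | hy1
  · exact le_trans (by simpa using hC y ⟨hy, hy1⟩) (le_max_left _ _)
  · have hz : deriv Real.smoothTransition y = 0 := by
      have he : Real.smoothTransition =ᶠ[𝓝 y] fun _ => 1 := by
        filter_upwards [Ioi_mem_nhds hy1] with z hz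
        exact Real.smoothTransition.one_of_one_le hz.le
      rw [he.deriv_eq, deriv_const]
    simp [hz]

theorem stmt7 {m : ℕ} (hm : 1 ≤ m) (x : ℕ → (Fin m → ℝ) × ℝ)
    (hne : ∀ i, x i ≠ 0)
    (hconv : Tendsto x atTop (𝓝 0))
    (hpos : ∀ i, 0 < (x i).2)
    (hanti : StrictAnti fun i => (x i).2) :
    ∃ χ : ℝ → (Fin m → ℝ) × ℝ,
      ContDiffOn ℝ 1 χ (Set.Icc 0 1) ∧ χ 0 = 0 ∧
      {i | x i ∈ χ '' Set.Icc (0 : ℝ) 1}.Infinite ∧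
      MonotoneOn (fun t => (χ t).2) (Set.Icc 0 1) := by
  classical
  -- choose a rapidly decaying subsequence
  have key : ∀ k n : ℕ, ∃ i, n ≤ i ∧ ‖x i‖ < (8:ℝ)⁻¹ ^ k := by
    intro k n
    have h8 : (0:ℝ) < 8⁻¹ ^ k := by positivity
    obtain ⟨N, hN⟩ := (Metric.tendsto_atTop.1 hconv) _ h8
    exact ⟨max n N, le_max_left _ _, by
      simpa [dist_zero_right] using hN _ (le_max_right _ _)⟩
  choose g hg1 hg2 using key
  let φ : ℕ → ℕ := fun k => Nat.rec (g 0 0) (fun k ih => g (k+1) (ih+1)) k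
  have hφ_mono : StrictMono φ := strictMono_nat_of_lt_succ fun k =>
    lt_of_lt_of_le (Nat.lt_succ_self _) (hg1 (k+1) (φ k + 1))
  have hφ_norm : ∀ k, ‖x (φ k)‖ < (8:ℝ)⁻¹ ^ k := by
    intro k
    cases k with
    | zero => exact hg2 0 0
    | succ k => exact hg2 (k+1) _
  set p : ℕ → (Fin m → ℝ) × ℝ := fun k => x (φ k) with hp
  have hpnorm : ∀ k, ‖p k‖ ≤ (8:ℝ)⁻¹ ^ k := fun k => (hφ_norm k).le
  have h8nn : (0:ℝ) ≤ 8⁻¹ := by norm_num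
  have hdiff : ∀ k, ‖p k - p (k+1)‖ ≤ 2 * (8:ℝ)⁻¹ ^ k := by
    intro k
    have h1 : (8:ℝ)⁻¹ ^ (k+1) ≤ 8⁻¹ ^ k := by
      rw [pow_succ]
      nlinarith [pow_nonneg h8nn k]
    calc ‖p k - p (k+1)‖ ≤ ‖p k‖ + ‖p (k+1)‖ := norm_sub_le _ _
      _ ≤ 8⁻¹ ^ k + 8⁻¹ ^ (k+1) := add_le_add (hpnorm k) (hpnorm (k+1))
      _ ≤ 2 * 8⁻¹ ^ k := by linarith
  set f : ℕ → ℝ → (Fin m → ℝ) × ℝ :=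
    fun k t => Real.smoothTransition ((2:ℝ)^(k+1) * t - 1) • (p k - p (k+1)) with hf
  -- summability of the norm bounds
  have hv0 : Summable (fun k => 2 * (8:ℝ)⁻¹ ^ k) :=
    (summable_geometric_of_lt_one h8nn (by norm_num)).mul_left 2
  have hfnorm : ∀ k t, ‖f k t‖ ≤ 2 * (8:ℝ)⁻¹ ^ k := by
    intro k t
    rw [hf]
    simp only [norm_smul, Real.norm_eq_abs]
    have habs : |Real.smoothTransition ((2:ℝ)^(k+1) * t - 1)| ≤ 1 := by
      rw [abs_le]
      exact ⟨by linarith [Real.smoothTransition.nonneg ((2:ℝ)^(k+1) * t - 1)],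
        Real.smoothTransition.le_one _⟩
    calc |Real.smoothTransition ((2:ℝ)^(k+1) * t - 1)| * ‖p k - p (k+1)‖
        ≤ 1 * ‖p k - p (k+1)‖ := by
          exact mul_le_mul_of_nonneg_right habs (norm_nonneg _)
      _ = ‖p k - p (k+1)‖ := one_mul _
      _ ≤ 2 * 8⁻¹ ^ k := hdiff k
  have hsummf : ∀ t, Summable (fun k => f k t) :=
    fun t => Summable.of_norm_bounded hv0 (fun k => hfnorm k t)
  -- the curve
  set χ : ℝ → (Fin m → ℝ) × ℝ := fun t => ∑' k, f k t with hχ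
  obtain ⟨C, hC0, hC⟩ := smoothTransition_deriv_bound
  -- each piece is C¹
  have hfc : ∀ k, ContDiff ℝ 1 (f k) := by
    intro k
    exact (Real.smoothTransition.contDiff.comp
      ((contDiff_const.mul contDiff_id).sub contDiff_const)).smul contDiff_const
  -- explicit derivative
  have hderiv : ∀ k t, HasDerivAt (f k)
      ((deriv Real.smoothTransition ((2:ℝ)^(k+1) * t - 1) * (2:ℝ)^(k+1)) • (p k - p (k+1))) t := by
    intro k t
    have h1 : HasDerivAt (fun t : ℝ => (2:ℝ)^(k+1) * t - 1) ((2:ℝ)^(k+1)) t := by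
      simpa using ((hasDerivAt_id t).const_mul ((2:ℝ)^(k+1))).sub_const 1
    have h2 : HasDerivAt Real.smoothTransition
        (deriv Real.smoothTransition ((2:ℝ)^(k+1)*t-1)) ((2:ℝ)^(k+1)*t-1) :=
      ((Real.smoothTransition.contDiff (n := 1)).differentiable one_ne_zero _).hasDerivAt
    exact (h2.comp t h1).smul_const (p k - p (k+1))
  -- derivative bound
  have hderiv_norm : ∀ k t, ‖deriv (f k) t‖ ≤ C * (2:ℝ)^(k+1) * (2 * 8⁻¹ ^ k) := by
    intro k t
    rw [(hderiv k t).deriv]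
    rw [norm_smul, Real.norm_eq_abs, abs_mul]
    have h2p : (0:ℝ) < (2:ℝ)^(k+1) := by positivity
    rw [abs_of_pos h2p]
    exact mul_le_mul (mul_le_mul_of_nonneg_right (hC _) h2p.le) (hdiff k)
      (norm_nonneg _) (by positivity)
  -- the uniform bound sequence
  have hvsum : Summable (fun i => (1 + C) * ((2:ℝ)^(i+1) * (2 * 8⁻¹ ^ i))) := by
    have hEq : (fun i => (1 + C) * ((2:ℝ)^(i+1) * (2 * 8⁻¹ ^ i)))
        = fun i => ((1 + C) * 4) * (4:ℝ)⁻¹ ^ i := by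
      funext i
      have h48 : (2:ℝ)^i * 8⁻¹ ^ i = 4⁻¹ ^ i := by
        rw [← mul_pow]; norm_num
      rw [pow_succ]
      nlinarith [h48]
    rw [hEq]
    exact (summable_geometric_of_lt_one (by norm_num) (by norm_num)).mul_left _
  have hbound : ∀ (k : ℕ) (i : ℕ) (t : ℝ), (k : ℕ∞) ≤ 1 →
      ‖iteratedFDeriv ℝ k (f i) t‖ ≤ (1 + C) * ((2:ℝ)^(i+1) * (2 * 8⁻¹ ^ i)) := by
    intro k i t hk
    have hk' : k ≤ 1 := by exact_mod_cast hk
    have h2p1 : (1:ℝ) ≤ (2:ℝ)^(i+1) := one_le_pow₀ one_le_two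
    have h8p : (0:ℝ) ≤ (8:ℝ)⁻¹ ^ i := by positivity
    have hA : (1:ℝ) ≤ (1 + C) * (2:ℝ)^(i+1) := by nlinarith
    interval_cases k
    · rw [norm_iteratedFDeriv_zero]
      calc ‖f i t‖ ≤ 2 * 8⁻¹ ^ i := hfnorm i t
        _ ≤ (1 + C) * ((2:ℝ)^(i+1) * (2 * 8⁻¹ ^ i)) := by nlinarith
    · have h1 : ‖iteratedFDeriv ℝ 1 (f i) t‖ = ‖deriv (f i) t‖ := by
        rw [show (1:ℕ) = 0 + 1 from rfl, ← norm_iteratedFDeriv_fderiv,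
          norm_iteratedFDeriv_zero, ← norm_deriv_eq_norm_fderiv]
      rw [h1]
      calc ‖deriv (f i) t‖ ≤ C * (2:ℝ)^(i+1) * (2 * 8⁻¹ ^ i) := hderiv_norm i t
        _ ≤ (1 + C) * ((2:ℝ)^(i+1) * (2 * 8⁻¹ ^ i)) := by nlinarith
  have hχ_cd : ContDiff ℝ 1 χ :=
    contDiff_tsum hfc (fun k _ => hvsum) hbound
  -- evaluation at dyadic points
  have hval : ∀ j : ℕ, χ ((2:ℝ)⁻¹ ^ j) = p j := by
    intro j
    have h2j : (0:ℝ) < (2:ℝ)^j := by positivity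
    have hzero : ∀ k < j, f k ((2:ℝ)⁻¹ ^ j) = 0 := by
      intro k hk
      have h1 : (2:ℝ)^(k+1) ≤ (2:ℝ)^j := pow_le_pow_right₀ one_le_two hk
      have harg : (2:ℝ)^(k+1) * (2:ℝ)⁻¹ ^ j - 1 ≤ 0 := by
        have h2 := mul_le_mul_of_nonneg_right h1 (inv_nonneg.2 h2j.le)
        have h3 : (2:ℝ)^j * ((2:ℝ)^j)⁻¹ = 1 := mul_inv_cancel₀ h2j.ne'
        rw [inv_pow]
        linarith
      have hθ : Real.smoothTransition ((2:ℝ)^(k+1) * (2:ℝ)⁻¹ ^ j - 1) = 0 :=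
        Real.smoothTransition.zero_of_nonpos harg
      simp only [hf]
      rw [hθ, zero_smul]
    have hone : ∀ k, f (k + j) ((2:ℝ)⁻¹ ^ j) = p (k + j) - p (k + j + 1) := by
      intro k
      have h1 : (2:ℝ)^(j+1) ≤ (2:ℝ)^(k+j+1) := pow_le_pow_right₀ one_le_two (by omega)
      have harg : (1:ℝ) ≤ (2:ℝ)^(k+j+1) * (2:ℝ)⁻¹ ^ j - 1 := by
        have h2 := mul_le_mul_of_nonneg_right h1 (inv_nonneg.2 h2j.le)
        have h3 : (2:ℝ)^(j+1) * ((2:ℝ)^j)⁻¹ = 2 := by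
          rw [pow_succ]
          field_simp
        rw [inv_pow]
        linarith
      have hθ : Real.smoothTransition ((2:ℝ)^(k+j+1) * (2:ℝ)⁻¹ ^ j - 1) = 1 :=
        Real.smoothTransition.one_of_one_le harg
      simp only [hf]
      rw [hθ, one_smul]
    have hS : Summable (fun k => p k - p (k+1)) :=
      Summable.of_norm_bounded hv0 hdiff
    have hSj : Summable (fun k => p (k + j) - p (k + j + 1)) := by
      have := (summable_nat_add_iff j).2 hS
      exact this.congr (fun k => by ring_nf)
    have htel : HasSum (fun k => p (k + j) - p (k + j + 1)) (p j) := by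
      have hps : Tendsto (fun n => p (n + j)) atTop (𝓝 0) := by
        have h1 : Tendsto (fun n : ℕ => φ (n + j)) atTop atTop :=
          hφ_mono.tendsto_atTop.comp (tendsto_add_atTop_nat j)
        exact hconv.comp h1
      have h2 : Tendsto (fun n => ∑ i ∈ Finset.range n, (p (i + j) - p (i + j + 1)))
          atTop (𝓝 (p j)) := by
        have heq : ∀ n, ∑ i ∈ Finset.range n, (p (i + j) - p (i + j + 1))
            = p j - p (n + j) := by
          intro n
          have := Finset.sum_range_sub' (fun i => p (i + j)) n
          simpa [Nat.add_right_comm] using this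
        simp only [heq]
        simpa using tendsto_const_nhds.sub hps
      have h3 := hSj.hasSum.tendsto_sum_nat
      have h4 : ∑' k, (p (k + j) - p (k + j + 1)) = p j := tendsto_nhds_unique h3 h2
      rw [← h4]; exact hSj.hasSum
    have hs := hsummf ((2:ℝ)⁻¹ ^ j)
    calc χ ((2:ℝ)⁻¹ ^ j) = ∑' k, f k ((2:ℝ)⁻¹ ^ j) := rfl
      _ = (∑ i ∈ Finset.range j, f i ((2:ℝ)⁻¹ ^ j)) + ∑' i, f (i + j) ((2:ℝ)⁻¹ ^ j) :=
        (Summable.sum_add_tsum_nat_add j hs).symm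
      _ = ∑' i, f (i + j) ((2:ℝ)⁻¹ ^ j) := by
        rw [Finset.sum_eq_zero (fun k hk => hzero k (Finset.mem_range.1 hk)), zero_add]
      _ = ∑' i, (p (i + j) - p (i + j + 1)) := tsum_congr (fun i => hone i)
      _ = p j := htel.tsum_eq
  refine ⟨χ, hχ_cd.contDiffOn, ?_, ?_, ?_⟩
  · -- χ 0 = 0
    have h0 : ∀ k, f k 0 = 0 := by
      intro k
      have : (2:ℝ)^(k+1) * 0 - 1 ≤ 0 := by norm_num
      rw [hf]
      simp [Real.smoothTransition.zero_of_nonpos this]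
    calc χ 0 = ∑' k, f k 0 := rfl
      _ = 0 := by simp [h0]
  · -- infinitely many points
    apply Set.infinite_of_injective_forall_mem (f := φ) hφ_mono.injective
    intro j
    refine ⟨(2:ℝ)⁻¹ ^ j, ⟨by positivity, pow_le_one₀ (by norm_num) (by norm_num)⟩, ?_⟩
    rw [hval j]
  · -- monotone last coordinate
    intro a _ b _ hab
    have hsnd : ∀ t, (χ t).2 = ∑' k, (f k t).2 := by
      intro t
      exact (ContinuousLinearMap.snd ℝ (Fin m → ℝ) ℝ).map_tsum (hsummf t)
    simp only [hsnd]
    have hsummS : ∀ t, Summable (fun k => (f k t).2) := by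
      intro t
      exact (hsummf t).map (ContinuousLinearMap.snd ℝ (Fin m → ℝ) ℝ)
        (ContinuousLinearMap.continuous _)
    apply Summable.tsum_le_tsum _ (hsummS a) (hsummS b)
    intro k
    have hnn : (0:ℝ) ≤ (p k).2 - (p (k+1)).2 := by
      have := hanti (hφ_mono (Nat.lt_succ_self k))
      simp only [hp] at *
      linarith
    have hθ : Real.smoothTransition ((2:ℝ)^(k+1) * a - 1)
        ≤ Real.smoothTransition ((2:ℝ)^(k+1) * b - 1) := by
      apply smoothTransition_monotone
      have h2p : (0:ℝ) ≤ (2:ℝ)^(k+1) := by positivity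
      nlinarith
    rw [hf]
    simp only [Prod.smul_snd, smul_eq_mul, Prod.snd_sub]
    exact mul_le_mul_of_nonneg_right hθ hnn
end

section
/- Let C_i be a sequence of closed convex subsets of ℝ^n (or of a compact metric space of closed subsets) converging in the Hausdorff sense to a closed convex set C with nonempty interior, all contained in a fixed compact set. Then the boundaries ∂C_i converge in the Hausdorff sense to ∂C. -/
open Filter Topology Metric Set

section aux

variable {E : Type*} [NormedAddCommGroup E] [NormedSpace ℝ E]

/-- Erosion lemma: if a ball of radius `r` around `x` is within `δ` of the closed convex set
`A`, then the ball of radius `r - δ` is inside `A`. -/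
lemma erosion_aux {A : Set E} (hA : Convex ℝ A) (hAc : IsClosed A) (hAne : A.Nonempty)
    {δ r : ℝ} (hδ : 0 ≤ δ) {x : E}
    (h : ∀ y : E, dist y x ≤ r → infDist y A ≤ δ)
    {z : E} (hz : dist z x ≤ r - δ) : z ∈ A := by
  have hrδ : 0 ≤ r - δ := le_trans dist_nonneg hz
  have hr0 : 0 ≤ r := by linarith
  by_contra hzA
  obtain ⟨f, u, hfa, hfz⟩ := geometric_hahn_banach_closed_point hA hAc hzA
  have hf0 : f ≠ 0 := by
    rintro rfl
    obtain ⟨a, ha⟩ := hAne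
    have h1 := hfa a ha
    simp only [ContinuousLinearMap.zero_apply] at h1 hfz
    linarith
  have hfn : 0 < ‖f‖ := norm_pos_iff.mpr hf0
  -- On the ball of radius r around x, f is bounded by u + δ‖f‖
  have hball : ∀ y : E, dist y x ≤ r → f y ≤ u + δ * ‖f‖ := by
    intro y hy
    have h1 : f y - u ≤ ‖f‖ * infDist y A := by
      rcases le_or_gt (f y - u) 0 with h' | h'
      · exact h'.trans (mul_nonneg hfn.le infDist_nonneg)
      · have : (f y - u) / ‖f‖ ≤ infDist y A := by
          by_contra hc
          push_neg at hc
          obtain ⟨a, haA, hda⟩ := (infDist_lt_iff hAne).mp hc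
          have h2 : f y - f a ≤ ‖f‖ * dist y a := by
            calc f y - f a = f (y - a) := by rw [map_sub]
            _ ≤ |f (y - a)| := le_abs_self _
            _ = ‖f (y - a)‖ := (Real.norm_eq_abs _).symm
            _ ≤ ‖f‖ * ‖y - a‖ := f.le_opNorm _
            _ = ‖f‖ * dist y a := by rw [dist_eq_norm]
          have h3 : ‖f‖ * dist y a < ‖f‖ * ((f y - u) / ‖f‖) :=
            mul_lt_mul_of_pos_left hda hfn
          rw [mul_div_cancel₀ _ hfn.ne'] at h3
          have := hfa a haA
          linarith
        calc f y - u ≤ ‖f‖ * ((f y - u) / ‖f‖) := by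
              rw [mul_div_cancel₀ _ hfn.ne']
        _ ≤ ‖f‖ * infDist y A := mul_le_mul_of_nonneg_left this hfn.le
    have h2 : ‖f‖ * infDist y A ≤ ‖f‖ * δ := mul_le_mul_of_nonneg_left (h y hy) hfn.le
    nlinarith
  -- sup of f over the ball: f x + r ‖f‖ ≤ u + δ ‖f‖
  have hsup : f x + r * ‖f‖ ≤ u + δ * ‖f‖ := by
    by_contra hc
    push_neg at hc
    rcases eq_or_lt_of_le hr0 with hr | hr
    · have := hball x (by simp [← hr])
      nlinarith
    have hε : (u + δ * ‖f‖ - f x) / r < ‖f‖ := by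
      rw [div_lt_iff₀ hr]; nlinarith
    obtain ⟨v, hv1, hv2⟩ := f.exists_lt_apply_of_lt_opNorm hε
    -- replace v by ±v so that f v = ‖f v‖
    have : ∃ w : E, ‖w‖ ≤ 1 ∧ (u + δ * ‖f‖ - f x) / r < f w := by
      rcases le_or_gt 0 (f v) with h' | h'
      · exact ⟨v, hv1.le, by rwa [Real.norm_eq_abs, abs_of_nonneg h'] at hv2⟩
      · refine ⟨-v, by simpa using hv1.le, ?_⟩
        rw [map_neg]
        rwa [Real.norm_eq_abs, abs_of_neg h'] at hv2
    obtain ⟨w, hw1, hw2⟩ := this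
    have hy : dist (x + r • w) x ≤ r := by
      rw [dist_eq_norm, add_sub_cancel_left, norm_smul, Real.norm_eq_abs, abs_of_nonneg hr0]
      nlinarith
    have := hball _ hy
    rw [map_add, map_smul, smul_eq_mul] at this
    have h4 : u + δ * ‖f‖ - f x < r * f w := by
      have := (div_lt_iff₀ hr).mp hw2
      linarith [mul_comm r (f w)]
    linarith
  -- f z ≤ f x + (r - δ)‖f‖
  have hz2 : f z - f x ≤ (r - δ) * ‖f‖ := by
    calc f z - f x = f (z - x) := by rw [map_sub]
    _ ≤ |f (z - x)| := le_abs_self _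
    _ = ‖f (z - x)‖ := (Real.norm_eq_abs _).symm
    _ ≤ ‖f‖ * ‖z - x‖ := f.le_opNorm _
    _ ≤ ‖f‖ * (r - δ) := mul_le_mul_of_nonneg_left (by rwa [← dist_eq_norm]) hfn.le
    _ = (r - δ) * ‖f‖ := mul_comm _ _
  linarith

/-- If `x ∉ B` and `B` is closed and nonempty, the nearest point of `B` lies on the frontier. -/
lemma infDist_frontier_le_of_not_mem [ProperSpace E] {B : Set E} (hBc : IsClosed B)
    (hBne : B.Nonempty) {x : E} (hx : x ∉ B) :
    infDist x (frontier B) ≤ infDist x B := by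
  obtain ⟨p, hpB, hpd⟩ := hBc.exists_infDist_eq_dist hBne x
  have hxp : x ≠ p := fun h => hx (h ▸ hpB)
  have hp : p ∈ frontier B := by
    rw [frontier_eq_closure_inter_closure, hBc.closure_eq]
    refine ⟨hpB, ?_⟩
    have : Tendsto (fun t : ℝ => p + t • (x - p)) (𝓝[>] 0) (𝓝 p) := by
      have hcont : Continuous fun t : ℝ => p + t • (x - p) := by fun_prop
      have h0 : Tendsto (fun t : ℝ => p + t • (x - p)) (𝓝 0) (𝓝 p) := by
        simpa using hcont.tendsto 0
      exact h0.mono_left nhdsWithin_le_nhds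
    refine mem_closure_of_tendsto (this.mono_right (le_refl _)) ?_
    filter_upwards [Ioo_mem_nhdsGT_of_mem (Set.left_mem_Ico.mpr one_pos)] with t ht
    intro htB
    have hd : dist x (p + t • (x - p)) = (1 - t) * dist x p := by
      rw [dist_eq_norm, dist_eq_norm]
      have : x - (p + t • (x - p)) = (1 - t) • (x - p) := by
        rw [sub_smul, one_smul]; abel
      rw [this, norm_smul, Real.norm_eq_abs, abs_of_nonneg (by linarith [ht.2] : (0:ℝ) ≤ 1 - t)]
    have h1 : infDist x B ≤ (1 - t) * dist x p := hd ▸ infDist_le_dist_of_mem htB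
    have h2 : 0 < dist x p := dist_pos.mpr hxp
    have h3 : (1 - t) * dist x p < dist x p := by nlinarith [ht.1, ht.2]
    rw [hpd] at h1
    linarith
  calc infDist x (frontier B) ≤ dist x p := infDist_le_dist_of_mem hp
  _ = infDist x B := hpd.symm

/-- If `x ∈ B` (closed) and the complement is nonempty, then the ball of radius
`infDist x (frontier B)` is inside `B`. -/
lemma ball_infDist_frontier_subset [ProperSpace E] {B : Set E} (hBc : IsClosed B)
    {x : E} (hx : x ∈ B) (hBcne : Bᶜ.Nonempty) :
    ball x (infDist x (frontier B)) ⊆ B := by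
  have hcl : IsClosed (closure Bᶜ) := isClosed_closure
  obtain ⟨q, hq, hqd⟩ := hcl.exists_infDist_eq_dist hBcne.closure x
  have hqB : q ∈ B := by
    by_contra hqB
    have hqopen : Bᶜ ∈ 𝓝 q := hBc.isOpen_compl.mem_nhds hqB
    have hxq : x ≠ q := fun h => hqB (h ▸ hx)
    -- move q slightly toward x, staying in Bᶜ, decreasing distance
    have : Tendsto (fun t : ℝ => q + t • (x - q)) (𝓝[>] 0) (𝓝 q) := by
      have hcont : Continuous fun t : ℝ => q + t • (x - q) := by fun_prop
      have h0 : Tendsto (fun t : ℝ => q + t • (x - q)) (𝓝 0) (𝓝 q) := by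
        simpa using hcont.tendsto 0
      exact h0.mono_left nhdsWithin_le_nhds
    have hmem : ∀ᶠ t in 𝓝[>] (0:ℝ), (q + t • (x - q)) ∈ Bᶜ := this.eventually_mem hqopen
    have hlt : ∀ᶠ t in 𝓝[>] (0:ℝ), t ∈ Set.Ioo (0:ℝ) 1 :=
      Ioo_mem_nhdsGT_of_mem (Set.left_mem_Ico.mpr one_pos)
    obtain ⟨t, htB, ht⟩ := (hmem.and hlt).exists
    have hd : dist x (q + t • (x - q)) = (1 - t) * dist x q := by
      rw [dist_eq_norm, dist_eq_norm]
      have : x - (q + t • (x - q)) = (1 - t) • (x - q) := by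
        rw [sub_smul, one_smul]; abel
      rw [this, norm_smul, Real.norm_eq_abs, abs_of_nonneg (by linarith [ht.2] : (0:ℝ) ≤ 1 - t)]
    have h1 : infDist x (closure Bᶜ) ≤ (1 - t) * dist x q :=
      hd ▸ infDist_le_dist_of_mem (subset_closure htB)
    have h2 : 0 < dist x q := dist_pos.mpr hxq
    have h3 : (1 - t) * dist x q < dist x q := by nlinarith [ht.1, ht.2]
    rw [hqd] at h1
    linarith
  have hqfr : q ∈ frontier B := by
    rw [frontier_eq_closure_inter_closure, hBc.closure_eq]
    exact ⟨hqB, hq⟩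
  have hle : infDist x (frontier B) ≤ infDist x Bᶜ := by
    calc infDist x (frontier B) ≤ dist x q := infDist_le_dist_of_mem hqfr
    _ = infDist x (closure Bᶜ) := hqd.symm
    _ = infDist x Bᶜ := infDist_closure
  intro y hy
  by_contra hyB
  have : infDist x Bᶜ ≤ dist x y := infDist_le_dist_of_mem hyB
  rw [mem_ball'] at hy
  linarith [hle.trans this]

/-- Main inequality: Hausdorff distance of frontiers is at most Hausdorff distance of the
convex bodies. -/
lemma hausdorffDist_frontier_le [ProperSpace E] {A B : Set E}
    (hAcp : IsCompact A) (hAco : Convex ℝ A) (hAne : A.Nonempty) (hAc : Aᶜ.Nonempty)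
    (hBcp : IsCompact B) (hBco : Convex ℝ B) (hBne : B.Nonempty) (hBc : Bᶜ.Nonempty) :
    hausdorffDist (frontier A) (frontier B) ≤ hausdorffDist A B := by
  have hfin : EMetric.hausdorffEdist A B ≠ ⊤ :=
    hausdorffEdist_ne_top_of_nonempty_of_bounded hAne hBne hAcp.isBounded hBcp.isBounded
  set δ := hausdorffDist A B with hδdef
  have hδ0 : 0 ≤ δ := hausdorffDist_nonneg
  have key : ∀ (A B : Set E), IsCompact A → Convex ℝ A → A.Nonempty → Aᶜ.Nonempty →
      IsCompact B → Convex ℝ B → B.Nonempty → Bᶜ.Nonempty →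
      EMetric.hausdorffEdist A B ≠ ⊤ →
      ∀ x ∈ frontier A, infDist x (frontier B) ≤ hausdorffDist A B := by
    intro A B hAcp hAco hAne hAc hBcp hBco hBne hBc hfin x hx
    by_cases hxB : x ∈ B
    · by_contra hcon
      push_neg at hcon
      set r := infDist x (frontier B) with hrdef
      have hδ0 : 0 ≤ hausdorffDist A B := hausdorffDist_nonneg
      obtain ⟨r', hr'1, hr'2⟩ := exists_between hcon
      have hball : ∀ y : E, dist y x ≤ r' → infDist y A ≤ hausdorffDist A B := by
        intro y hy
        have hyB : y ∈ B := by
          apply ball_infDist_frontier_subset hBcp.isClosed hxB hBc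
          rw [mem_ball]
          exact lt_of_le_of_lt hy hr'2
        rw [hausdorffDist_comm] at *
        exact infDist_le_hausdorffDist_of_mem hyB (by rw [hausdorffEDist_comm]; exact hfin)
      have hzx : dist x x ≤ r' - hausdorffDist A B := by
        rw [dist_self]; linarith
      have hxA : x ∈ interior A := by
        rw [mem_interior]
        refine ⟨ball x (r' - hausdorffDist A B), ?_, isOpen_ball, ?_⟩
        · intro z hz
          exact erosion_aux hAco hAcp.isClosed hAne hδ0 hball (le_of_lt (mem_ball.mp hz))
        · rw [mem_ball]; simp; linarith
      exact hx.2 hxA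
    · have hxA : x ∈ A := hAcp.isClosed.frontier_subset hx
      have h1 : infDist x B ≤ hausdorffDist A B :=
        infDist_le_hausdorffDist_of_mem hxA hfin
      calc infDist x (frontier B) ≤ infDist x B :=
            infDist_frontier_le_of_not_mem hBcp.isClosed hBne hxB
      _ ≤ hausdorffDist A B := h1
  apply hausdorffDist_le_of_infDist hδ0
  · exact key A B hAcp hAco hAne hAc hBcp hBco hBne hBc hfin
  · intro x hx
    have := key B A hBcp hBco hBne hBc hAcp hAco hAne hAc
      (by have h := hfin; unfold EMetric.hausdorffEdist at h ⊢; rwa [hausdorffEDist_comm] at h) x hx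
    rwa [hausdorffDist_comm] at this

end aux

theorem stmt9 {n : ℕ} (Ci : ℕ → Set (EuclideanSpace ℝ (Fin n)))
    (C K : Set (EuclideanSpace ℝ (Fin n))) (hK : IsCompact K)
    (hCi : ∀ i, IsCompact (Ci i) ∧ Convex ℝ (Ci i) ∧ (interior (Ci i)).Nonempty ∧ Ci i ⊆ K)
    (hC : IsCompact C ∧ Convex ℝ C ∧ (interior C).Nonempty ∧ C ⊆ K)
    (hconv : Tendsto (fun i => Metric.hausdorffDist (Ci i) C) atTop (𝓝 0)) :
    Tendsto (fun i => Metric.hausdorffDist (frontier (Ci i)) (frontier C)) atTop (𝓝 0) := by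
  obtain ⟨hCcp, hCco, hCint, hCK⟩ := hC
  rcases Nat.eq_zero_or_pos n with hn | hn
  · -- degenerate case: the space is a single point
    haveI : Subsingleton (EuclideanSpace ℝ (Fin n)) := by
      subst hn
      exact ⟨fun a b => PiLp.ext fun i => Fin.elim0 i⟩
    have huniv : ∀ S : Set (EuclideanSpace ℝ (Fin n)), (interior S).Nonempty → frontier S = ∅ := by
      intro S hS
      have hSne : S.Nonempty := hS.mono interior_subset
      have : S = Set.univ := by
        obtain ⟨x, hx⟩ := hSne
        ext y
        simp only [Set.mem_univ, iff_true]
        rwa [Subsingleton.elim y x]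
      rw [this, frontier_univ]
    have h1 : ∀ i, hausdorffDist (frontier (Ci i)) (frontier C) = 0 := by
      intro i
      rw [huniv _ (hCi i).2.2.1, huniv _ hCint, hausdorffDist_empty]
    simp only [h1]
    exact tendsto_const_nhds (x := (0:ℝ)) (f := atTop (α := ℕ))
  · haveI : Nonempty (Fin n) := ⟨⟨0, hn⟩⟩
    haveI : Nontrivial (EuclideanSpace ℝ (Fin n)) := by
      refine nontrivial_of_ne (EuclideanSpace.single ⟨0, hn⟩ (1:ℝ)) 0 ?_
      intro h
      have := congrFun (congrArg (fun v : EuclideanSpace ℝ (Fin n) => (v : Fin n → ℝ)) h) ⟨0, hn⟩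
      simp [EuclideanSpace.single] at this
    apply squeeze_zero (fun i => hausdorffDist_nonneg) _ hconv
    intro i
    obtain ⟨hicp, hico, hiint, hiK⟩ := hCi i
    exact hausdorffDist_frontier_le hicp hico (hiint.mono interior_subset)
      (Set.nonempty_compl.mpr hicp.ne_univ) hCcp hCco (hCint.mono interior_subset)
      (Set.nonempty_compl.mpr hCcp.ne_univ)
end
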